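/- Let G be an N×N Hermitian positive definite complex matrix with unit diagonal entries (G_{n,n} = 1 for all n), with smallest eigenvalue λ_min > 0 and largest eigenvalue λ_max, and set η = (1/4)(λ_max/λ_min + λ_min/λ_max + 2). Fix n ∈ {1,…,N} and let Q = (G⁻¹)_{n,n} > 0. Let τ > 0 be a real number (playing the role of T_BS·T_MU), let β_1, β_m be nonzero complex numbers, let m ≥ 1, and let P_1, …, P_m be real numbers with P_k ≥ 0 for k < m and P_m > 0. Define Λ² = τ |β_1|² / Q. Then log₂(1 + P_m |β_m|² |β_1|⁻² Λ² / (Σ_{k=1}^{m−1} P_k |β_m|² |β_1|⁻² Λ² + 1)) ≥ log₂(1 + P_m τ |β_m|² / (Σ_{k=1}^{m−1} P_k τ |β_m|² + η)). -/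

import Mathlib

open Matrix ComplexOrder

/-!
Diagonalising `G = U diag(λ) Uᴴ`, the weights `w_j = |U_{n j}|²` form a probability vector with
`∑ w_j λ_j = G_{n n} = 1` and `Q = ∑ w_j / λ_j`. Since `1/x` lies below its chord on
`[λ_min, λ_max]`, Kantorovich's inequality gives `Q ≤ (λ_min + λ_max)² / (4 λ_min λ_max) = η`.
After `Λ² = τ |β₁|² / Q` cancels `|β₁|²`, the SINR is `P_m X / (S X + Q)` with `X = τ |β_m|²`,
which is antitone in `Q`.
-/

theorem Finset.sum_mul_sum_div_le_of_mem_Icc {ι : Type*} (s : Finset ι) {w x : ι → ℝ} {a b : ℝ}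
    (hw : ∀ j ∈ s, 0 ≤ w j) (hw1 : ∑ j ∈ s, w j = 1) (ha : 0 < a)
    (hx : ∀ j ∈ s, x j ∈ Set.Icc a b) :
    (∑ j ∈ s, w j * x j) * (∑ j ∈ s, w j / x j) ≤ (a + b) ^ 2 / (4 * a * b) := by
  obtain ⟨j₀, hj₀, -⟩ := Finset.exists_ne_zero_of_sum_ne_zero (hw1.trans_ne one_ne_zero)
  have hb : 0 < b := ha.trans_le ((hx j₀ hj₀).1.trans (hx j₀ hj₀).2)
  set t := ∑ j ∈ s, w j * x j
  have hchord : ∑ j ∈ s, w j / x j ≤ (a + b - t) / (a * b) := by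
    calc ∑ j ∈ s, w j / x j ≤ ∑ j ∈ s, w j * ((a + b - x j) / (a * b)) := by
          refine Finset.sum_le_sum fun j hj => ?_
          obtain ⟨hax, hxb⟩ := hx j hj
          rw [div_eq_mul_one_div]
          refine mul_le_mul_of_nonneg_left ?_ (hw j hj)
          rw [div_le_div_iff₀ (by linarith) (by positivity)]
          nlinarith
      _ = (a + b - t) / (a * b) := by
          simp only [mul_div, ← Finset.sum_div, mul_sub, Finset.sum_sub_distrib, ← Finset.sum_mul,
            hw1, one_mul, t]
  have ht : 0 ≤ t := Finset.sum_nonneg fun j hj => mul_nonneg (hw j hj) (ha.le.trans (hx j hj).1)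
  calc t * ∑ j ∈ s, w j / x j ≤ t * ((a + b - t) / (a * b)) := mul_le_mul_of_nonneg_left hchord ht
    _ ≤ (a + b) ^ 2 / (4 * a * b) := by
        rw [mul_div_assoc', div_le_div_iff₀ (by positivity) (by positivity)]
        nlinarith [sq_nonneg (a + b - 2 * t), mul_pos ha hb]

namespace Matrix

variable {𝕜 ι : Type*} [RCLike 𝕜] [Fintype ι] [DecidableEq ι]

theorem mul_diagonal_mul_star_apply_self (U : Matrix ι ι 𝕜) (d : ι → ℝ) (i : ι) :
    (U * diagonal (RCLike.ofReal ∘ d : ι → 𝕜) * star U) i i =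
      ((∑ j, ‖U i j‖ ^ 2 * d j : ℝ) : 𝕜) := by
  rw [mul_apply]
  simp only [mul_diagonal, star_apply, Function.comp_apply, RCLike.ofReal_sum,
    RCLike.ofReal_mul, RCLike.ofReal_pow]
  refine Finset.sum_congr rfl fun j _ => ?_
  rw [mul_right_comm, RCLike.star_def, RCLike.mul_conj, mul_comm]

theorem sum_norm_sq_apply_eq_one (U : unitary (Matrix ι ι 𝕜)) (i : ι) :
    ∑ j, ‖(U : Matrix ι ι 𝕜) i j‖ ^ 2 = 1 := by
  have h := mul_diagonal_mul_star_apply_self (U : Matrix ι ι 𝕜) 1 i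
  have hdiag : diagonal (RCLike.ofReal ∘ 1 : ι → 𝕜) = 1 := by simp
  simp only [hdiag, mul_one, Pi.one_apply, Unitary.mul_star_self_of_mem U.2, one_apply_eq] at h
  exact_mod_cast h.symm

namespace IsHermitian

variable {A : Matrix ι ι 𝕜} (hA : A.IsHermitian)
include hA

theorem apply_self_eq_sum (i : ι) :
    A i i =
      ((∑ j, ‖(hA.eigenvectorUnitary : Matrix ι ι 𝕜) i j‖ ^ 2 * hA.eigenvalues j : ℝ) : 𝕜) := by
  conv_lhs => rw [hA.spectral_theorem]
  exact mul_diagonal_mul_star_apply_self _ _ i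

theorem inv_eq_conjStarAlgAut (h : ∀ j, hA.eigenvalues j ≠ 0) :
    A⁻¹ = Unitary.conjStarAlgAut 𝕜 _ hA.eigenvectorUnitary
      (diagonal (RCLike.ofReal ∘ hA.eigenvalues⁻¹ : ι → 𝕜)) := by
  refine inv_eq_right_inv ?_
  conv_lhs => arg 1; rw [hA.spectral_theorem]
  rw [← map_mul, diagonal_mul_diagonal,
    ← map_one (Unitary.conjStarAlgAut 𝕜 _ hA.eigenvectorUnitary), ← diagonal_one]
  congr 2
  ext j
  simp [h j]

theorem inv_apply_self_eq_sum (h : ∀ j, hA.eigenvalues j ≠ 0) (i : ι) :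
    A⁻¹ i i =
      ((∑ j, ‖(hA.eigenvectorUnitary : Matrix ι ι 𝕜) i j‖ ^ 2 / hA.eigenvalues j : ℝ) : 𝕜) := by
  rw [hA.inv_eq_conjStarAlgAut h, Unitary.conjStarAlgAut_apply, mul_diagonal_mul_star_apply_self]
  simp [div_eq_mul_inv]

theorem re_apply_self_mul_re_inv_apply_self_le {a b : ℝ} (ha : 0 < a)
    (hab : ∀ j, hA.eigenvalues j ∈ Set.Icc a b) (i : ι) :
    RCLike.re (A i i) * RCLike.re (A⁻¹ i i) ≤ (a + b) ^ 2 / (4 * a * b) := by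
  have hne : ∀ j, hA.eigenvalues j ≠ 0 := fun j => (ha.trans_le (hab j).1).ne'
  rw [hA.apply_self_eq_sum, hA.inv_apply_self_eq_sum hne, RCLike.ofReal_re, RCLike.ofReal_re]
  exact Finset.univ.sum_mul_sum_div_le_of_mem_Icc (fun j _ => sq_nonneg _)
    (by simpa using sum_norm_sq_apply_eq_one hA.eigenvectorUnitary i) ha fun j _ => hab j

end IsHermitian
end Matrix

theorem div_add_le_div_div_add_one {A B Q η : ℝ} (hA : 0 ≤ A) (hB : 0 ≤ B) (hQ : 0 < Q)
    (hQη : Q ≤ η) : A / (B + η) ≤ A / Q / (B / Q + 1) := by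
  rw [div_add_one hQ.ne', div_div_div_cancel_right₀ hQ.ne']
  gcongr

theorem rate_lower_bound_perfect_correlation_general (N : ℕ)
    (G : Matrix (Fin N) (Fin N) ℂ) (hG : G.PosDef)
    (hdiag : ∀ k, G k k = 1)
    (lmin lmax : ℝ) (hlmin : 0 < lmin)
    (hmin : IsLeast (Set.range hG.isHermitian.eigenvalues) lmin)
    (hmax : IsGreatest (Set.range hG.isHermitian.eigenvalues) lmax)
    (η : ℝ) (hη : η = (1 / 4) * (lmax / lmin + lmin / lmax + 2))
    (n : Fin N) (Q : ℝ) (hQdef : Q = ((G⁻¹) n n).re) (hQpos : 0 < Q)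
    (τ : ℝ) (hτ : 0 < τ) (β1 βm : ℂ) (hβ1 : β1 ≠ 0)
    (m : ℕ) (P : ℕ → ℝ)
    (hPk : ∀ k, 1 ≤ k → k < m → 0 ≤ P k) (hPm : 0 < P m)
    (Λsq : ℝ) (hΛ : Λsq = τ * ‖β1‖ ^ 2 / Q) :
    Real.logb 2 (1 + P m * ‖βm‖ ^ 2 / ‖β1‖ ^ 2 * Λsq /
        ((∑ k ∈ Finset.Ico 1 m, P k * ‖βm‖ ^ 2 / ‖β1‖ ^ 2 * Λsq) + 1))
      ≥ Real.logb 2 (1 + P m * τ * ‖βm‖ ^ 2 /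
        ((∑ k ∈ Finset.Ico 1 m, P k * τ * ‖βm‖ ^ 2) + η)) := by
  have hbounds : ∀ j, hG.isHermitian.eigenvalues j ∈ Set.Icc lmin lmax :=
    fun j => ⟨hmin.2 ⟨j, rfl⟩, hmax.2 ⟨j, rfl⟩⟩
  have hQη : Q ≤ η := by
    have hlmax : 0 < lmax := hlmin.trans_le (hmin.2 hmax.1)
    have hkant := hG.isHermitian.re_apply_self_mul_re_inv_apply_self_le hlmin hbounds n
    rw [hdiag, RCLike.one_re, one_mul] at hkant
    calc Q = RCLike.re (G⁻¹ n n) := hQdef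
      _ ≤ (lmin + lmax) ^ 2 / (4 * lmin * lmax) := hkant
      _ = η := by
        rw [hη]
        field_simp
        ring
  have hscale : ∀ p, p * ‖βm‖ ^ 2 / ‖β1‖ ^ 2 * Λsq = p * τ * ‖βm‖ ^ 2 / Q := fun p => by
    rw [hΛ]
    field_simp
  have hinterf : 0 ≤ ∑ k ∈ Finset.Ico 1 m, P k * τ * ‖βm‖ ^ 2 :=
    Finset.sum_nonneg fun k hk => by
      have := hPk k (Finset.mem_Ico.1 hk).1 (Finset.mem_Ico.1 hk).2
      positivity
  simp only [hscale, ← Finset.sum_div]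
  refine Real.logb_le_logb_of_le one_lt_two ?_ ?_
  · have := hQpos.trans_le hQη
    positivity
  · gcongr 1 + ?_
    exact div_add_le_div_div_add_one (by positivity) hinterf hQpos hQη

/-- Theorem 1 of the paper (perfect correlation): with `G = F_RF* F_RF`
Hermitian positive definite with unit diagonal, `Q = (G⁻¹)_{n,n}`,
`η = (1/4)(λ_max/λ_min + λ_min/λ_max + 2)` and `Λ² = τ |β₁|² / Q`, the
achievable rate of the `m`-th user is lower bounded:
`log₂(1 + P_m |β_m|²|β₁|⁻²Λ² / (Σ_{k<m} P_k |β_m|²|β₁|⁻²Λ² + 1))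
  ≥ log₂(1 + P_m τ |β_m|² / (Σ_{k<m} P_k τ |β_m|² + η))`. -/
theorem rate_lower_bound_perfect_correlation (N : ℕ)
    (G : Matrix (Fin N) (Fin N) ℂ) (hG : G.PosDef)
    (hdiag : ∀ k, G k k = 1)
    (lmin lmax : ℝ) (hlmin : 0 < lmin)
    (hmin : IsLeast (Set.range hG.isHermitian.eigenvalues) lmin)
    (hmax : IsGreatest (Set.range hG.isHermitian.eigenvalues) lmax)
    (η : ℝ) (hη : η = (1 / 4) * (lmax / lmin + lmin / lmax + 2))
    (n : Fin N) (Q : ℝ) (hQdef : Q = ((G⁻¹) n n).re) (hQpos : 0 < Q)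
    (τ : ℝ) (hτ : 0 < τ) (β1 βm : ℂ) (hβ1 : β1 ≠ 0) (hβm : βm ≠ 0)
    (m : ℕ) (hm : 1 ≤ m) (P : ℕ → ℝ)
    (hPk : ∀ k, 1 ≤ k → k < m → 0 ≤ P k) (hPm : 0 < P m)
    (Λsq : ℝ) (hΛ : Λsq = τ * ‖β1‖ ^ 2 / Q) :
    Real.logb 2 (1 + P m * ‖βm‖ ^ 2 / ‖β1‖ ^ 2 * Λsq /
        ((∑ k ∈ Finset.Ico 1 m, P k * ‖βm‖ ^ 2 / ‖β1‖ ^ 2 * Λsq) + 1))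
      ≥ Real.logb 2 (1 + P m * τ * ‖βm‖ ^ 2 /
        ((∑ k ∈ Finset.Ico 1 m, P k * τ * ‖βm‖ ^ 2) + η)) :=
  rate_lower_bound_perfect_correlation_general N G hG hdiag lmin lmax hlmin hmin hmax η hη n Q hQdef
    hQpos τ hτ β1 βm hβ1 m P hPk hPm Λsq hΛ
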